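/- There is no n ∈ ℕ with h_n > h_{n+1} > h_{n+2} > h_{n+3} > h_{n+4}. -/

import Mathlib

/-!
In `c = ε b + a`, `d = δ c + b` with `ε, δ = ±1`, a strict descent `a > b > c > d` forces `ε = δ`.
Five strictly decreasing values of `h` would therefore give `t (n+2) = t (n+3) = t (n+4)`, but the
Thue–Morse sequence has no three equal consecutive terms, since `t (2k+1) = -t (2k)`.
-/

def t (n : ℕ) : ℤ := (-1) ^ ((Nat.digits 2 n).sum)

def h : ℕ → ℤ
  | 0 => 0
  | 1 => 1
  | (n + 2) => t (n + 2) * h (n + 1) + h n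

lemma t_eq_one_or_neg_one (n : ℕ) : t n = 1 ∨ t n = -1 :=
  neg_one_pow_eq_or ℤ _

lemma t_two_mul (k : ℕ) : t (2 * k) = t k := by
  rcases Nat.eq_zero_or_pos k with rfl | hk
  · rfl
  · have := Nat.digits_add 2 one_lt_two 0 k two_pos (Or.inr hk.ne')
    rw [zero_add] at this
    simp only [t, this, List.sum_cons, zero_add]

lemma t_two_mul_add_one (k : ℕ) : t (2 * k + 1) = -t k := by
  have := Nat.digits_add 2 one_lt_two 1 k one_lt_two (Or.inl one_ne_zero)
  rw [add_comm] at this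
  simp only [t, this, List.sum_cons, pow_add, pow_one, neg_one_mul]

lemma t_two_mul_add_one_ne (k : ℕ) : t (2 * k + 1) ≠ t (2 * k) := by
  rw [t_two_mul_add_one, t_two_mul]
  rcases t_eq_one_or_neg_one k with hk | hk <;> rw [hk] <;> decide

lemma not_t_eq_t_succ_and_t_succ_eq (m : ℕ) : ¬ (t m = t (m + 1) ∧ t (m + 1) = t (m + 2)) := by
  rintro ⟨h₁, h₂⟩
  obtain ⟨k, rfl | rfl⟩ := Nat.even_or_odd' m
  · exact t_two_mul_add_one_ne k h₁.symm
  · exact t_two_mul_add_one_ne (k + 1) h₂.symm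

lemma h_add_two (n : ℕ) : h (n + 2) = t (n + 2) * h (n + 1) + h n := by
  rw [h]

lemma sign_eq_of_strictAnti_of_recurrence {ε δ a b c d : ℤ} (hε : ε = 1 ∨ ε = -1)
    (hδ : δ = 1 ∨ δ = -1) (hc : c = ε * b + a) (hd : d = δ * c + b)
    (hab : a > b) (hbc : b > c) (hcd : c > d) : ε = δ := by
  rcases hε with rfl | rfl <;> rcases hδ with rfl | rfl <;> first | rfl | (exfalso; linarith)

theorem stmt11 : ¬ ∃ n : ℕ, h n > h (n + 1) ∧ h (n + 1) > h (n + 2) ∧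
    h (n + 2) > h (n + 3) ∧ h (n + 3) > h (n + 4) := by
  rintro ⟨n, h₀₁, h₁₂, h₂₃, h₃₄⟩
  have sign₂₃ : t (n + 2) = t (n + 3) :=
    sign_eq_of_strictAnti_of_recurrence (t_eq_one_or_neg_one _) (t_eq_one_or_neg_one _)
      (h_add_two n) (h_add_two (n + 1)) h₀₁ h₁₂ h₂₃
  have sign₃₄ : t (n + 3) = t (n + 4) :=
    sign_eq_of_strictAnti_of_recurrence (t_eq_one_or_neg_one _) (t_eq_one_or_neg_one _)
      (h_add_two (n + 1)) (h_add_two (n + 2)) h₁₂ h₂₃ h₃₄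
  exact not_t_eq_t_succ_and_t_succ_eq (n + 2) ⟨sign₂₃, sign₃₄⟩
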